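/- arXiv:2104.06659 — 2 statements merged into one kernel-verified Lean document; each statement's English description precedes it below -/
import Mathlib

section
/- Let M, N ∈ K^{n×n} be nonsingular with N M-orthogonal (N^{⋆_M}N = I, i.e., M⁻¹N*MN = I), M₂ = diag(M,M), X ∈ K^{n×n}, η ∈ K. Suppose [N; ηX] = VR with V = [V₁;V₂] ∈ K^{2n×n}, R nonsingular, and I + |η|²X^{⋆_M}X invertible. Then ηX(I + |η|²X^{⋆_M}X)⁻¹ = V₂ (V^{⋆_{M₂,M}}V)⁻¹ V₁^{⋆_M} N. -/
/-!
Put `W = [N; ηX]`, so that `V = W R⁻¹`. Since `N^{⋆_M} N = I`, the Gram matrix of `W` is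
`S = W^{⋆_{M₂,M}} W = I + |η|² X^{⋆_M} X`, hence that of `V` is `P S R⁻¹` with `P = (R⁻¹)^{⋆_M}`,
and `V₁^{⋆_M} N = P N^{⋆_M} N = P`. Therefore
`V₂ (V^{⋆_{M₂,M}} V)⁻¹ V₁^{⋆_M} N = ηX R⁻¹ · R S⁻¹ P⁻¹ · P = ηX S⁻¹`.
-/

open Matrix

namespace Matrix

variable {l m n α : Type*} [Fintype l] [Fintype m] [Fintype n] [DecidableEq n]
  [CommRing α] [StarRing α]

/-- The paper's `A^{⋆_{M', M}} = M⁻¹ Aᴴ M'`, the adjoint of `A` with respect to the sesquilinear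
forms with Gram matrices `M'` on the codomain and `M` on the domain. -/
noncomputable def weightedAdjoint (M' : Matrix m m α) (M : Matrix n n α) (A : Matrix m n α) : Matrix n m α :=
  M⁻¹ * Aᴴ * M'

theorem weightedAdjoint_mul [DecidableEq m] {M₁ : Matrix l l α} {M₂ : Matrix m m α} (M₃ : Matrix n n α)
    (hM₂ : IsUnit M₂.det) (A : Matrix l m α) (B : Matrix m n α) :
    weightedAdjoint M₁ M₃ (A * B) = weightedAdjoint M₂ M₃ B * weightedAdjoint M₁ M₂ A := by
  simp only [weightedAdjoint, conjTranspose_mul, Matrix.mul_assoc,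
    mul_nonsing_inv_cancel_left _ _ hM₂]

theorem weightedAdjoint_smul (M' : Matrix m m α) (M : Matrix n n α) (c : α) (A : Matrix m n α) :
    weightedAdjoint M' M (c • A) = star c • weightedAdjoint M' M A := by
  simp only [weightedAdjoint, conjTranspose_smul, Matrix.mul_smul, Matrix.smul_mul]

theorem weightedAdjoint_fromRows_mul_self (M₁ : Matrix l l α) (M₂ : Matrix m m α)
    (M : Matrix n n α) (A : Matrix l n α) (B : Matrix m n α) :
    weightedAdjoint (fromBlocks M₁ 0 0 M₂) M (fromRows A B) * fromRows A B =
      weightedAdjoint M₁ M A * A + weightedAdjoint M₂ M B * B := by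
  simp only [weightedAdjoint, conjTranspose_fromRows_eq_fromCols_conjTranspose, mul_fromCols,
    fromCols_mul_fromBlocks, Matrix.mul_zero, add_zero, zero_add, fromCols_mul_fromRows]

theorem isUnit_det_weightedAdjoint {M' M A : Matrix n n α} (hM' : IsUnit M'.det)
    (hM : IsUnit M.det) (hA : IsUnit A.det) : IsUnit (weightedAdjoint M' M A).det := by
  rw [weightedAdjoint, det_mul, det_mul, det_conjTranspose]
  exact ((isUnit_nonsing_inv_det M hM).mul hA.star).mul hM'

theorem weightedAdjoint_fromRows_smul_mul_self {M N : Matrix n n α}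
    (hN : weightedAdjoint M M N * N = 1) (X : Matrix n n α) (η : α) :
    weightedAdjoint (fromBlocks M 0 0 M) M (fromRows N (η • X)) * fromRows N (η • X) =
      1 + (star η * η) • (weightedAdjoint M M X * X) := by
  rw [weightedAdjoint_fromRows_mul_self, hN, weightedAdjoint_smul, Matrix.smul_mul,
    Matrix.mul_smul, smul_smul]

end Matrix

theorem gen_qr_iteration_lemma_swapped_general {n : ℕ}
    (M N : Matrix (Fin n) (Fin n) ℂ)
    (hM : IsUnit M.det)
    (hNorth : M⁻¹ * Nᴴ * M * N = 1)
    (X : Matrix (Fin n) (Fin n) ℂ) (η : ℂ)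
    (V₁ V₂ R : Matrix (Fin n) (Fin n) ℂ)
    (hR : IsUnit R.det)
    (htop : N = V₁ * R)
    (hbot : η • X = V₂ * R) :
    (η • X) * (1 + ((Complex.normSq η : ℝ) : ℂ) • (M⁻¹ * Xᴴ * M * X))⁻¹ =
      V₂ *
        (M⁻¹ * (Matrix.fromRows V₁ V₂)ᴴ * Matrix.fromBlocks M 0 0 M *
            Matrix.fromRows V₁ V₂)⁻¹ *
        (M⁻¹ * V₁ᴴ * M) * N := by
  have hN : weightedAdjoint M M N * N = 1 := hNorth
  have hη : ((Complex.normSq η : ℝ) : ℂ) = star η * η := Complex.normSq_eq_conj_mul_self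
  set S := 1 + (star η * η) • (weightedAdjoint M M X * X)
  set P := weightedAdjoint M M R⁻¹
  have hV₁ : V₁ = N * R⁻¹ := by rw [htop, mul_nonsing_inv_cancel_right _ _ hR]
  have hV₂ : V₂ = η • X * R⁻¹ := by rw [hbot, mul_nonsing_inv_cancel_right _ _ hR]
  have hGram : weightedAdjoint (fromBlocks M 0 0 M) M (fromRows V₁ V₂) * fromRows V₁ V₂ =
      P * S * R⁻¹ := by
    rw [hV₁, hV₂, ← fromRows_mul, weightedAdjoint_mul _ hM, Matrix.mul_assoc P,
      ← Matrix.mul_assoc _ _ R⁻¹, weightedAdjoint_fromRows_smul_mul_self hN,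
      Matrix.mul_assoc]
  have hV₁N : weightedAdjoint M M V₁ * N = P := by
    rw [hV₁, weightedAdjoint_mul _ hM, Matrix.mul_assoc, hN, Matrix.mul_one]
  have hP : IsUnit P.det := isUnit_det_weightedAdjoint hM hM (isUnit_nonsing_inv_det R hR)
  rw [hη]
  change η • X * S⁻¹ = V₂ * (weightedAdjoint (fromBlocks M 0 0 M) M (fromRows V₁ V₂) *
    fromRows V₁ V₂)⁻¹ * weightedAdjoint M M V₁ * N
  rw [hGram, Matrix.mul_assoc _ _ N, hV₁N, hV₂, Matrix.mul_inv_rev, Matrix.mul_inv_rev,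
    nonsing_inv_nonsing_inv R hR]
  simp only [Matrix.mul_assoc, nonsing_inv_mul_cancel_left _ _ hR, nonsing_inv_mul _ hP,
    Matrix.mul_one]

/-- With `N` `M`-orthogonal (`M⁻¹ Nᴴ M N = I`), if `[N; ηX] = V R` with
`R` nonsingular and `I + |η|² X^{⋆_M} X` invertible, then
`ηX (I + |η|² X^{⋆_M} X)⁻¹ = V₂ (V^{⋆_{M₂,M}} V)⁻¹ V₁^{⋆_M} N`. -/
theorem gen_qr_iteration_lemma_swapped {n : ℕ}
    (M N : Matrix (Fin n) (Fin n) ℂ)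
    (hM : IsUnit M.det) (hN : IsUnit N.det)
    (hNorth : M⁻¹ * Nᴴ * M * N = 1)
    (X : Matrix (Fin n) (Fin n) ℂ) (η : ℂ)
    (V₁ V₂ R : Matrix (Fin n) (Fin n) ℂ)
    (hR : IsUnit R.det)
    (htop : N = V₁ * R)
    (hbot : η • X = V₂ * R)
    (hinv : IsUnit (1 + ((Complex.normSq η : ℝ) : ℂ) • (M⁻¹ * Xᴴ * M * X)).det) :
    (η • X) * (1 + ((Complex.normSq η : ℝ) : ℂ) • (M⁻¹ * Xᴴ * M * X))⁻¹ =
      V₂ *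
        (M⁻¹ * (Matrix.fromRows V₁ V₂)ᴴ * Matrix.fromBlocks M 0 0 M *
            Matrix.fromRows V₁ V₂)⁻¹ *
        (M⁻¹ * V₁ᴴ * M) * N :=
  gen_qr_iteration_lemma_swapped_general M N hM hNorth X η V₁ V₂ R hR htop hbot
end

section
/- Let Σ be a signature matrix and A ∈ K^{n×n} be Σ-self-adjoint (ΣA*Σ = A) with ΣA Hermitian positive definite. Then all eigenvalues of A are real, and moreover the self-adjoint factor S = (ΣA*ΣA)^{1/2} = (A²)^{1/2} of the generalized polar decomposition of A exists and has only positive real eigenvalues. -/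
/-!
Write `H = Σ A = Uᴴ U` with `U` invertible. Since `Σ² = 1`, `A = Σ H = U⁻¹ (U Σ Uᴴ) U`, so `A`
is similar to the invertible Hermitian matrix `M = U Σ Uᴴ` and its eigenvalues are real. Then
`S = U⁻¹ |M| U` squares to `U⁻¹ M² U = A²` and is similar to the positive definite `|M|`.
-/

open Matrix
open scoped ComplexOrder

/-- A signature matrix: diagonal with entries `±1`. -/
def IsSignatureMatrix {k : ℕ} (S : Matrix (Fin k) (Fin k) ℂ) : Prop :=
  ∃ d : Fin k → ℝ, (∀ i, d i = 1 ∨ d i = -1) ∧ S = Matrix.diagonal fun i => (d i : ℂ)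

open scoped MatrixOrder

lemma IsSignatureMatrix.mul_self {k : ℕ} {S : Matrix (Fin k) (Fin k) ℂ}
    (hS : IsSignatureMatrix S) : S * S = 1 := by
  obtain ⟨d, hd, rfl⟩ := hS
  rw [diagonal_mul_diagonal, ← diagonal_one]
  congr 1
  funext i
  rcases hd i with h | h <;> simp [h]

lemma IsSignatureMatrix.isHermitian {k : ℕ} {S : Matrix (Fin k) (Fin k) ℂ}
    (hS : IsSignatureMatrix S) : S.IsHermitian := by
  obtain ⟨d, -, rfl⟩ := hS
  exact isHermitian_diagonal_of_self_adjoint _ (by ext; simp)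

namespace Matrix

variable {𝕜 : Type*} [RCLike 𝕜] {n : Type*} [Fintype n] [DecidableEq n]

lemma PosDef.pos_of_mem_spectrum {T : Matrix n n 𝕜} (hT : T.PosDef) {μ : 𝕜}
    (hμ : μ ∈ spectrum 𝕜 T) : 0 < μ :=
  ((posSemidef_iff_isHermitian_and_spectrum_nonneg.mp hT.posSemidef).2 hμ).lt_of_ne
    fun h => spectrum.zero_notMem 𝕜 hT.isUnit (h ▸ hμ)

lemma IsHermitian.im_eq_zero_of_mem_spectrum {M : Matrix n n 𝕜} (hM : M.IsHermitian) {μ : 𝕜}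
    (hμ : μ ∈ spectrum 𝕜 M) : RCLike.im μ = 0 := by
  rw [hM.spectrum_eq_image_range] at hμ
  obtain ⟨_, -, rfl⟩ := hμ
  simp

lemma IsHermitian.cfcAbs_sq {M : Matrix n n 𝕜} (hM : M.IsHermitian) : CFC.abs M ^ 2 = M ^ 2 := by
  rw [CFC.abs_sq, star_eq_conjTranspose, hM.eq, sq]

lemma posDef_cfcAbs_of_isUnit {M : Matrix n n 𝕜} (hM : IsUnit M) : (CFC.abs M).PosDef :=
  (IsStrictlyPositive.sqrt (star M * M)
    ((hM.star.mul hM).isStrictlyPositive (star_mul_self_nonneg M))).posDef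

lemma PosDef.exists_units_eq_conjTranspose_mul_self {H : Matrix n n 𝕜} (hH : H.PosDef) :
    ∃ u : (Matrix n n 𝕜)ˣ, H = (u : Matrix n n 𝕜)ᴴ * u := by
  have hR := IsStrictlyPositive.isUnit_cfcSqrt H hH.isStrictlyPositive
  refine ⟨hR.unit, ?_⟩
  simp only [IsUnit.unit_spec]
  rw [(CFC.sqrt_nonneg H).posSemidef.isHermitian.eq, CFC.sqrt_mul_sqrt_self H hH.posSemidef.nonneg]

lemma exists_units_conj_isHermitian_of_posDef_mul {Sig A : Matrix n n 𝕜}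
    (hSig : Sig.IsHermitian) (hSigSq : Sig * Sig = 1) (hpos : (Sig * A).PosDef) :
    ∃ (u : (Matrix n n 𝕜)ˣ) (M : Matrix n n 𝕜),
      M.IsHermitian ∧ IsUnit M ∧ A = (↑u⁻¹ : Matrix n n 𝕜) * M * u := by
  obtain ⟨u, hu⟩ := hpos.exists_units_eq_conjTranspose_mul_self
  refine ⟨u, u * Sig * (u : Matrix n n 𝕜)ᴴ, ?_, ?_, ?_⟩
  · exact isHermitian_mul_mul_conjTranspose _ hSig
  · exact (u.isUnit.mul (IsUnit.of_mul_eq_one _ hSigSq)).mul u.isUnit.star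
  · calc A = Sig * (Sig * A) := by rw [← mul_assoc, hSigSq, one_mul]
      _ = _ := by rw [hu]; simp [mul_assoc]

end Matrix

/-- For a definite pseudosymmetric matrix `A` (`Σ Aᴴ Σ = A` with `Σ A`
Hermitian positive definite), all eigenvalues of `A` are real, and the self-adjoint
factor `S = (Σ Aᴴ Σ A)^{1/2} = (A²)^{1/2}` of the generalized polar decomposition
exists and has only positive real eigenvalues. -/
theorem definite_pseudosymmetric_real_spectrum {n : ℕ}
    (Sig A : Matrix (Fin n) (Fin n) ℂ)
    (hSig : IsSignatureMatrix Sig)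
    (hA : Sig * Aᴴ * Sig = A)
    (hpos : (Sig * A).PosDef) :
    (∀ lam ∈ spectrum ℂ A, lam.im = 0) ∧
      ∃ S : Matrix (Fin n) (Fin n) ℂ,
        S * S = Sig * Aᴴ * Sig * A ∧
        S * S = A * A ∧
        ∀ mu ∈ spectrum ℂ S, mu.im = 0 ∧ 0 < mu.re := by
  obtain ⟨u, M, hM, hMunit, rfl⟩ :=
    exists_units_conj_isHermitian_of_posDef_mul hSig.isHermitian hSig.mul_self hpos
  have hS : ((↑u⁻¹ : Matrix (Fin n) (Fin n) ℂ) * CFC.abs M * u) ^ 2 =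
      ((↑u⁻¹ : Matrix (Fin n) (Fin n) ℂ) * M * u) ^ 2 := by
    rw [Units.conj_pow', Units.conj_pow', hM.cfcAbs_sq]
  rw [sq, sq] at hS
  refine ⟨fun lam hlam => ?_, _, by rw [hA]; exact hS, hS, fun mu hmu => ?_⟩
  · rw [spectrum.units_conjugate'] at hlam
    exact hM.im_eq_zero_of_mem_spectrum hlam
  · rw [spectrum.units_conjugate'] at hmu
    obtain ⟨hre, him⟩ :=
      Complex.pos_iff.mp ((posDef_cfcAbs_of_isUnit hMunit).pos_of_mem_spectrum hmu)
    exact ⟨him.symm, hre⟩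
end
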